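/- arXiv:math-ph/0610013 — 9 statements merged into one kernel-verified Lean document; each statement's English description precedes it below -/
import Mathlib

section
/- Let n, m, r be positive integers with r ≤ mn. Let X₁,…,X_r : ℝⁿ → ℝⁿ be vector fields whose diagonal prolongations X̃₁,…,X̃_r to (ℝⁿ)^{m+1} are such that at every point (x₁,…,x_m) ∈ (ℝⁿ)^m the projected vectors pr_*(X̃_α)(x₁,…,x_m) = (X_α(x₁),…,X_α(x_m)) ∈ (ℝⁿ)^m, α = 1,…,r, are linearly independent. If b₁,…,b_r : (ℝⁿ)^{m+1} → ℝ are functions such that ∑_{α=1}^r b_α X̃_α is again a diagonal prolongation, i.e. there exists a vector field B : ℝⁿ → ℝⁿ with ∑_{α=1}^r b_α(x₀,…,x_m)·X_α(x_a) = B(x_a) for every a = 0,…,m and every (x₀,…,x_m) ∈ (ℝⁿ)^{m+1}, then every coefficient function b_α is constant. -/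
/-- Fundamental lemma on diagonal prolongations: if the projections of the
diagonal prolongations of `X 1, …, X r` onto the last `m` factors are linearly
independent at every point of `(ℝⁿ)^m`, and a functional combination
`∑ α, b α • X̃ α` is again a diagonal prolongation (of a vector field `B`),
then each coefficient function `b α` is constant. -/
theorem stmt_0 (n m r : ℕ) (hn : 0 < n) (hm : 0 < m) (hr : 0 < r)
    (hrmn : r ≤ m * n)
    (X : Fin r → (Fin n → ℝ) → (Fin n → ℝ))
    (hindep : ∀ p : Fin m → (Fin n → ℝ),
      LinearIndependent ℝ (fun α : Fin r => (fun a : Fin m => X α (p a))))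
    (b : Fin r → ((Fin (m + 1) → (Fin n → ℝ)) → ℝ))
    (hB : ∃ B : (Fin n → ℝ) → (Fin n → ℝ),
      ∀ (q : Fin (m + 1) → (Fin n → ℝ)) (a : Fin (m + 1)),
        ∑ α : Fin r, b α q • X α (q a) = B (q a)) :
    ∀ α : Fin r, ∀ q q' : Fin (m + 1) → (Fin n → ℝ), b α q = b α q' := by
  obtain ⟨B, hB⟩ := hB
  have li : ∀ (p : Fin m → (Fin n → ℝ)) (g : Fin r → ℝ),
      (∑ α : Fin r, g α • (fun a : Fin m => X α (p a))) = 0 → ∀ α, g α = 0 :=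
    fun p g hg => Fintype.linearIndependent_iff.mp (hindep p) g hg
  -- b depends only on the last m coordinates
  have tail_eq : ∀ q q' : Fin (m+1) → (Fin n → ℝ),
      (∀ a : Fin m, q a.succ = q' a.succ) → ∀ α, b α q = b α q' := by
    intro q q' h α
    have key := li (fun a => q a.succ) (fun α => b α q - b α q') ?_
    · have := key α
      linarith
    · funext a
      have e1 := hB q a.succ
      have e2 := hB q' a.succ
      rw [h a] at e1
      have : (∑ α : Fin r,
          (fun α => b α q - b α q') α • (fun a : Fin m => X α (q a.succ))) a
          = ∑ α : Fin r, (b α q - b α q') • X α (q a.succ) := by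
        simp [Finset.sum_apply]
      rw [this]
      have : ∑ α : Fin r, (b α q - b α q') • X α (q a.succ)
          = (∑ α : Fin r, b α q • X α (q' a.succ))
            - ∑ α : Fin r, b α q' • X α (q' a.succ) := by
        rw [← Finset.sum_sub_distrib]
        refine Finset.sum_congr rfl fun α _ => ?_
        rw [h a, sub_smul]
      rw [this, e1, e2, sub_self]
      rfl
  set c : Fin r → (Fin m → (Fin n → ℝ)) → ℝ :=
    fun α p => b α (Fin.cons 0 p) with hc
  have head : ∀ (p : Fin m → (Fin n → ℝ)) (y : Fin n → ℝ),
      ∑ α : Fin r, c α p • X α y = B y := by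
    intro p y
    have h0 := hB (Fin.cons y p) 0
    simp only [Fin.cons_zero] at h0
    rw [← h0]
    refine Finset.sum_congr rfl fun α _ => ?_
    have := tail_eq (Fin.cons 0 p) (Fin.cons y p) (fun a => by simp) α
    rw [hc]
    simp only
    rw [this]
  have cc : ∀ (p p' : Fin m → (Fin n → ℝ)) (α : Fin r), c α p = c α p' := by
    intro p p' α
    have key := li (fun _ => 0) (fun α => c α p - c α p') ?_
    · have := key α
      linarith
    · funext a
      have : (∑ α : Fin r,
          (fun α => c α p - c α p') α • (fun _ : Fin m => X α 0)) a
          = ∑ α : Fin r, (c α p - c α p') • X α 0 := by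
        simp [Finset.sum_apply]
      rw [this]
      have : ∑ α : Fin r, (c α p - c α p') • X α 0
          = (∑ α : Fin r, c α p • X α 0) - ∑ α : Fin r, c α p' • X α 0 := by
        rw [← Finset.sum_sub_distrib]
        refine Finset.sum_congr rfl fun α _ => ?_
        rw [sub_smul]
      rw [this, head p 0, head p' 0, sub_self]
      rfl
  intro α q q'
  have hq : b α q = c α (fun a => q a.succ) :=
    tail_eq q (Fin.cons 0 (fun a => q a.succ)) (fun a => by simp) α
  have hq' : b α q' = c α (fun a => q' a.succ) :=
    tail_eq q' (Fin.cons 0 (fun a => q' a.succ)) (fun a => by simp) α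
  rw [hq, hq', cc]
end

section
/- Let n, m, r be positive integers with r ≤ mn and let X₁,…,X_r : ℝⁿ → ℝⁿ be differentiable vector fields whose diagonal prolongations X̃₁,…,X̃_r to (ℝⁿ)^{m+1} have linearly independent projections (X_α(x₁),…,X_α(x_m)), α = 1,…,r, at every point (x₁,…,x_m) ∈ (ℝⁿ)^m. Suppose there are functions c_{αβ}^γ : (ℝⁿ)^{m+1} → ℝ such that [X̃_α, X̃_β] = ∑_{γ=1}^r c_{αβ}^γ · X̃_γ pointwise. Then all the functions c_{αβ}^γ are constant; in particular there exist real constants c_{αβ}^γ such that [X_α, X_β] = ∑_{γ=1}^r c_{αβ}^γ X_γ on ℝⁿ, i.e. the vector fields X₁,…,X_r close on a finite-dimensional real Lie algebra. -/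
/-- If the diagonal prolongations `X̃ α` of differentiable vector fields
`X α : ℝⁿ → ℝⁿ` have linearly independent projections onto `(ℝⁿ)^m` at every
point, and `[X̃ α, X̃ β] = ∑ γ, c α β γ • X̃ γ` for functions
`c α β γ : (ℝⁿ)^{m+1} → ℝ`, then all the `c α β γ` are constant; in particular
the vector fields `X α` close on a finite-dimensional real Lie algebra:
`[X α, X β] = ∑ γ, C α β γ • X γ` for real constants `C α β γ`. -/
theorem stmt_3 (n m r : ℕ) (hn : 0 < n) (hm : 0 < m) (hr : 0 < r)
    (hrmn : r ≤ m * n)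
    (X : Fin r → (Fin n → ℝ) → (Fin n → ℝ))
    (hdiff : ∀ α, Differentiable ℝ (X α))
    (hindep : ∀ p : Fin m → (Fin n → ℝ),
      LinearIndependent ℝ (fun α : Fin r => (fun a : Fin m => X α (p a))))
    (c : Fin r → Fin r → Fin r → (Fin (m + 1) → (Fin n → ℝ)) → ℝ)
    (hc : ∀ (α β : Fin r) (q : Fin (m + 1) → (Fin n → ℝ)),
      fderiv ℝ (fun p (i : Fin (m + 1)) => X β (p i)) q (fun i => X α (q i))
        - fderiv ℝ (fun p (i : Fin (m + 1)) => X α (p i)) q (fun i => X β (q i))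
      = ∑ γ : Fin r, c α β γ q • (fun i : Fin (m + 1) => X γ (q i))) :
    (∀ α β γ : Fin r, ∀ q q' : Fin (m + 1) → (Fin n → ℝ),
      c α β γ q = c α β γ q') ∧
    ∃ C : Fin r → Fin r → Fin r → ℝ,
      ∀ (α β : Fin r) (x : Fin n → ℝ),
        fderiv ℝ (X β) x (X α x) - fderiv ℝ (X α) x (X β x)
          = ∑ γ : Fin r, C α β γ • X γ x := by
  -- the derivative of the prolongation, componentwise
  have hF : ∀ (δ : Fin r) (q v : Fin (m + 1) → (Fin n → ℝ)) (i : Fin (m + 1)),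
      fderiv ℝ (fun p (i : Fin (m + 1)) => X δ (p i)) q v i
        = fderiv ℝ (X δ) (q i) (v i) := by
    intro δ q v i
    have hder : HasFDerivAt (fun p (i : Fin (m + 1)) => X δ (p i))
        (ContinuousLinearMap.pi
          (fun i => (fderiv ℝ (X δ) (q i)).comp (ContinuousLinearMap.proj i))) q := by
      refine hasFDerivAt_pi.2 fun j => ?_
      exact ((hdiff δ (q j)).hasFDerivAt).comp q (hasFDerivAt_apply j q)
    rw [hder.fderiv]
    rfl
  -- the bracket identity holds componentwise
  have key : ∀ (α β : Fin r) (q : Fin (m + 1) → (Fin n → ℝ)) (i : Fin (m + 1)),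
      fderiv ℝ (X β) (q i) (X α (q i)) - fderiv ℝ (X α) (q i) (X β (q i))
        = ∑ γ : Fin r, c α β γ q • X γ (q i) := by
    intro α β q i
    have h := congrFun (hc α β q) i
    simp only [Pi.sub_apply, Finset.sum_apply, Pi.smul_apply] at h
    rw [hF α q _ i, hF β q _ i] at h
    exact h
  -- c only depends on the tail of q
  have tail : ∀ (α β : Fin r) (q q' : Fin (m + 1) → (Fin n → ℝ)),
      (∀ a : Fin m, q a.succ = q' a.succ) → ∀ γ, c α β γ q = c α β γ q' := by
    intro α β q q' htail γ
    have hli := Fintype.linearIndependent_iff.1 (hindep (fun a => q a.succ))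
    have hz : ∑ γ : Fin r, (c α β γ q - c α β γ q') •
        (fun a : Fin m => X γ (q a.succ)) = 0 := by
      funext a
      have h1 := key α β q a.succ
      have h2 := key α β q' a.succ
      simp only [Pi.sub_apply, Pi.smul_apply, Finset.sum_apply, Pi.zero_apply, htail a, sub_smul]
      rw [htail a] at h1
      rw [Finset.sum_sub_distrib, ← h1, ← h2, sub_self]
    have := hli (fun γ => c α β γ q - c α β γ q') hz γ
    linarith
  -- the bracket identity on ℝⁿ with coefficients from any q
  have keyA : ∀ (α β : Fin r) (q : Fin (m + 1) → (Fin n → ℝ)) (x : Fin n → ℝ),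
      fderiv ℝ (X β) x (X α x) - fderiv ℝ (X α) x (X β x)
        = ∑ γ : Fin r, c α β γ q • X γ x := by
    intro α β q x
    set q' : Fin (m + 1) → (Fin n → ℝ) := Function.update q 0 x with hq'
    have h0 : q' 0 = x := Function.update_self 0 x q
    have htail : ∀ a : Fin m, q' a.succ = q a.succ := fun a =>
      Function.update_of_ne (Fin.succ_ne_zero a) x q
    have h := key α β q' 0
    rw [h0] at h
    rw [h]
    refine Finset.sum_congr rfl fun γ _ => ?_
    rw [tail α β q' q htail γ]
  constructor
  · -- constancy of c
    intro α β γ q q'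
    have hli := Fintype.linearIndependent_iff.1 (hindep (fun _ => (0 : Fin n → ℝ)))
    have hz : ∑ γ : Fin r, (c α β γ q - c α β γ q') •
        (fun _ : Fin m => X γ (0 : Fin n → ℝ)) = 0 := by
      funext a
      have h1 := keyA α β q (0 : Fin n → ℝ)
      have h2 := keyA α β q' (0 : Fin n → ℝ)
      simp only [Pi.sub_apply, Pi.smul_apply, Finset.sum_apply, Pi.zero_apply, sub_smul]
      rw [Finset.sum_sub_distrib, ← h1, ← h2, sub_self]
    have := hli (fun γ => c α β γ q - c α β γ q') hz γ
    linarith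
  · exact ⟨fun α β γ => c α β γ (fun _ => 0), fun α β x => keyA α β (fun _ => 0) x⟩
end

section
/- Let Y : ℝ × ℝⁿ → ℝⁿ be a time-dependent vector field and I ⊆ ℝ an interval. Let Ψ : ℝⁿ × (ℝⁿ)^m → ℝⁿ satisfy: (i) for every (m+1)-tuple of solutions x₀(t),…,x_m(t) of dx/dt = Y(t,x) on a common subinterval of I the function t ↦ Ψ(x₀(t),x₁(t),…,x_m(t)) is constant; (ii) for every fixed (x₁,…,x_m) ∈ (ℝⁿ)^m the map x₀ ↦ Ψ(x₀, x₁,…,x_m) is injective; (iii) for every t₀ ∈ I and every x ∈ ℝⁿ there is a solution of the system on all of I taking the value x at t₀. Then, given solutions x₁(t),…,x_m(t) on I, a constant k ∈ ℝⁿ, and any curve x₀ : I → ℝⁿ satisfying Ψ(x₀(t), x₁(t),…,x_m(t)) = k for all t ∈ I, the curve x₀ is itself a solution of dx/dt = Y(t,x) on I. (This is the key step showing that a flat connection-type foliation whose leaves project bijectively onto the last m factors determines a superposition rule.) -/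
/-- Key step of the superposition construction: if `Ψ` is constant on tuples of
solutions (on subintervals of `I`), is injective in its first argument, and
solutions on `I` exist through every point, then any curve `x₀` satisfying the
leaf condition `Ψ(x₀(t), x₁(t),…,x_m(t)) = k` for given solutions `x₁,…,x_m`
and constant `k` is itself a solution of `dx/dt = Y(t,x)` on `I`. -/
theorem stmt_5 (n m : ℕ)
    (Y : ℝ → (Fin n → ℝ) → (Fin n → ℝ))
    (I : Set ℝ) (hI : I.OrdConnected)
    (Ψ : (Fin n → ℝ) → (Fin m → (Fin n → ℝ)) → (Fin n → ℝ))
    (hconst : ∀ J : Set ℝ, J ⊆ I → J.OrdConnected →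
      ∀ (x₀ : ℝ → (Fin n → ℝ)) (x : Fin m → ℝ → (Fin n → ℝ)),
        (∀ t ∈ J, HasDerivWithinAt x₀ (Y t (x₀ t)) J t) →
        (∀ i, ∀ t ∈ J, HasDerivWithinAt (x i) (Y t (x i t)) J t) →
        ∀ s ∈ J, ∀ t ∈ J,
          Ψ (x₀ s) (fun i => x i s) = Ψ (x₀ t) (fun i => x i t))
    (hinj : ∀ p : Fin m → (Fin n → ℝ),
      Function.Injective (fun x₀ : Fin n → ℝ => Ψ x₀ p))
    (hexist : ∀ t₀ ∈ I, ∀ x : Fin n → ℝ, ∃ ξ : ℝ → (Fin n → ℝ),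
      ξ t₀ = x ∧ ∀ t ∈ I, HasDerivWithinAt ξ (Y t (ξ t)) I t)
    (x : Fin m → ℝ → (Fin n → ℝ))
    (hx : ∀ i, ∀ t ∈ I, HasDerivWithinAt (x i) (Y t (x i t)) I t)
    (k : Fin n → ℝ)
    (x₀ : ℝ → (Fin n → ℝ))
    (hx₀ : ∀ t ∈ I, Ψ (x₀ t) (fun i => x i t) = k) :
    ∀ t ∈ I, HasDerivWithinAt x₀ (Y t (x₀ t)) I t := by
  intro t₀ ht₀
  obtain ⟨ξ, hξ0, hξ⟩ := hexist t₀ ht₀ (x₀ t₀)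
  have heq : ∀ t ∈ I, ξ t = x₀ t := by
    intro t ht
    apply hinj (fun i => x i t)
    have h1 := hconst I (le_refl I) hI ξ x hξ hx t ht t₀ ht₀
    simp only [h1, hξ0, hx₀ t₀ ht₀, hx₀ t ht]
  have := (hξ t₀ ht₀).congr (fun y hy => (heq y hy).symm) (heq t₀ ht₀).symm
  rwa [heq t₀ ht₀] at this
end

section
/- Let A : ℝ → M_n(ℝ) be a map into the n×n real matrices, let X : ℝ → M_n(ℝ) be differentiable with X'(t) = A(t)·X(t) and X(t) invertible for every t, and let x : ℝ → ℝⁿ be differentiable with x'(t) = A(t)·x(t) for every t. Then the function t ↦ X(t)⁻¹·x(t) is constant on ℝ. (This is the superposition function Ψ(x₀, x₁,…,x_n) = X⁻¹ x₀ for the homogeneous linear system, where X is the matrix whose columns are n solutions.) -/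
/-!
Writing `Y = X⁻¹`, differentiating `Y X = 1` gives `Y' = -X⁻¹ X' X⁻¹ = -X⁻¹ A`, so that
`(Y x)' = -X⁻¹ A x + X⁻¹ A x = 0`. Differentiability of `Y` comes from Cramer's rule
`X⁻¹ = (det X)⁻¹ • adj X`, whose entries are rational in the entries of `X`.
-/

open Matrix Filter Topology

section MatrixCalculus

variable {𝕜 : Type*} [NontriviallyNormedField 𝕜] {l m n : Type*} [Fintype m] {t : 𝕜}

theorem HasDerivAt.matrix_mul {M : 𝕜 → Matrix l m 𝕜} {N : 𝕜 → Matrix m n 𝕜}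
    {M' : Matrix l m 𝕜} {N' : Matrix m n 𝕜}
    (hM : ∀ i j, HasDerivAt (fun s => M s i j) (M' i j) t)
    (hN : ∀ i j, HasDerivAt (fun s => N s i j) (N' i j) t) (i : l) (k : n) :
    HasDerivAt (fun s => (M s * N s) i k) ((M' * N t + M t * N') i k) t := by
  simp only [mul_apply, Matrix.add_apply, ← Finset.sum_add_distrib]
  exact HasDerivAt.fun_sum fun j _ => (hM i j).mul (hN j k)

theorem HasDerivAt.matrix_mulVec {M : 𝕜 → Matrix l m 𝕜} {v : 𝕜 → m → 𝕜}
    {M' : Matrix l m 𝕜} {v' : m → 𝕜}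
    (hM : ∀ i j, HasDerivAt (fun s => M s i j) (M' i j) t) (hv : HasDerivAt v v' t) (i : l) :
    HasDerivAt (fun s => (M s *ᵥ v s) i) ((M' *ᵥ v t + M t *ᵥ v') i) t := by
  simp only [mulVec, dotProduct, Pi.add_apply, ← Finset.sum_add_distrib]
  exact HasDerivAt.fun_sum fun j _ => (hM i j).mul (hasDerivAt_pi.mp hv j)

variable [Fintype n] [DecidableEq n]

theorem DifferentiableAt.matrix_det {M : 𝕜 → Matrix n n 𝕜}
    (hM : ∀ i j, DifferentiableAt 𝕜 (fun s => M s i j) t) :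
    DifferentiableAt 𝕜 (fun s => (M s).det) t := by
  simp only [det_apply']
  exact DifferentiableAt.fun_sum fun σ _ =>
    (differentiableAt_const _).mul (DifferentiableAt.fun_finsetProd fun i _ => hM _ _)

theorem DifferentiableAt.matrix_adjugate {M : 𝕜 → Matrix n n 𝕜}
    (hM : ∀ i j, DifferentiableAt 𝕜 (fun s => M s i j) t) (i j : n) :
    DifferentiableAt 𝕜 (fun s => (M s).adjugate i j) t := by
  simp only [adjugate_apply]
  refine DifferentiableAt.matrix_det fun k l => ?_
  rcases eq_or_ne k j with rfl | hk
  · simpa only [updateRow_self] using differentiableAt_const _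
  · simpa only [updateRow_ne hk] using hM k l

theorem DifferentiableAt.matrix_inv {M : 𝕜 → Matrix n n 𝕜}
    (hM : ∀ i j, DifferentiableAt 𝕜 (fun s => M s i j) t) (ht : IsUnit (M t)) (i j : n) :
    DifferentiableAt 𝕜 (fun s => (M s)⁻¹ i j) t := by
  have hdet : (M t).det ≠ 0 := ((isUnit_iff_isUnit_det _).mp ht).ne_zero
  simp only [inv_def, Ring.inverse_eq_inv', Matrix.smul_apply, smul_eq_mul]
  exact ((DifferentiableAt.matrix_det hM).inv hdet).mul
    (DifferentiableAt.matrix_adjugate hM i j)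

theorem HasDerivAt.matrix_inv {M : 𝕜 → Matrix n n 𝕜} {M' : Matrix n n 𝕜}
    (hM : ∀ i j, HasDerivAt (fun s => M s i j) (M' i j) t) (ht : IsUnit (M t)) (i j : n) :
    HasDerivAt (fun s => (M s)⁻¹ i j) ((-((M t)⁻¹ * M' * (M t)⁻¹)) i j) t := by
  have hdet : IsUnit (M t).det := (isUnit_iff_isUnit_det _).mp ht
  obtain ⟨B, hB⟩ : ∃ B : Matrix n n 𝕜, ∀ i j, HasDerivAt (fun s => (M s)⁻¹ i j) (B i j) t :=
    ⟨of fun i j => _, fun i j =>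
      (DifferentiableAt.matrix_inv (fun i j => (hM i j).differentiableAt) ht i j).hasDerivAt⟩
  have hdet_ne : ∀ᶠ s in 𝓝 t, (M s).det ≠ 0 :=
    (DifferentiableAt.matrix_det fun i j => (hM i j).differentiableAt).continuousAt.eventually_ne
      hdet.ne_zero
  have hprod : B * M t + (M t)⁻¹ * M' = 0 := by
    ext i j
    refine (HasDerivAt.matrix_mul hB hM i j).unique ((hasDerivAt_const t ((1 : Matrix n n 𝕜) i j))
      |>.congr_of_eventuallyEq ?_)
    filter_upwards [hdet_ne] with s hs
    rw [nonsing_inv_mul _ (isUnit_iff_ne_zero.mpr hs)]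
  have hBeq : B = -((M t)⁻¹ * M' * (M t)⁻¹) := by
    calc B = (B * M t + (M t)⁻¹ * M') * (M t)⁻¹ - (M t)⁻¹ * M' * (M t)⁻¹ := by
          rw [add_mul, Matrix.mul_assoc B, mul_nonsing_inv _ hdet, Matrix.mul_one,
            add_sub_cancel_right]
      _ = -((M t)⁻¹ * M' * (M t)⁻¹) := by rw [hprod, Matrix.zero_mul, zero_sub]
  exact hBeq ▸ hB i j

end MatrixCalculus

/-- For a fundamental matrix `X` of the homogeneous linear system
`x' = A(t)x` (i.e. `X' = A(t)X` with `X(t)` invertible for all `t`) and any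
solution `x` of the system, the superposition function
`t ↦ X(t)⁻¹ · x(t)` is constant on `ℝ`. -/
theorem stmt_6 (n : ℕ)
    (A : ℝ → Matrix (Fin n) (Fin n) ℝ)
    (X : ℝ → Matrix (Fin n) (Fin n) ℝ)
    (hX : ∀ (t : ℝ) (i j : Fin n),
      HasDerivAt (fun s => X s i j) ((A t * X t) i j) t)
    (hXinv : ∀ t : ℝ, IsUnit (X t))
    (x : ℝ → Fin n → ℝ)
    (hx : ∀ (t : ℝ) (i : Fin n),
      HasDerivAt (fun s => x s i) ((A t).mulVec (x t) i) t) :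
    ∀ t : ℝ, (X t)⁻¹.mulVec (x t) = (X 0)⁻¹.mulVec (x 0) := by
  have hderiv : ∀ t, HasDerivAt (fun s => (X s)⁻¹ *ᵥ x s) 0 t := by
    intro t
    have hXt := (isUnit_iff_isUnit_det _).mp (hXinv t)
    have hcancel : -((X t)⁻¹ * (A t * X t) * (X t)⁻¹) = -((X t)⁻¹ * A t) := by
      rw [Matrix.mul_assoc, Matrix.mul_assoc, mul_nonsing_inv _ hXt, Matrix.mul_one]
    refine hasDerivAt_pi.mpr fun i => ?_
    have h := HasDerivAt.matrix_mulVec (HasDerivAt.matrix_inv (hX t) (hXinv t))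
      (hasDerivAt_pi.mpr (hx t)) i
    rwa [hcancel, neg_mulVec, mulVec_mulVec, neg_add_cancel] at h
  intro t
  exact is_const_of_deriv_eq_zero (fun s => (hderiv s).differentiableAt)
    (fun s => (hderiv s).deriv) t 0
end

section
/- Let f : ℝ → ℝ be continuous with f(x) > 0 for all x, and define φ(y) = ∫₀^y dζ/f(ζ). Let a : I → ℝ on an interval I, let x₁ : I → ℝ be differentiable with x₁'(t) = a(t)f(x₁(t)) for all t ∈ I, let k ∈ ℝ, and let x₀ : I → ℝ be differentiable with φ(x₀(t)) − φ(x₁(t)) = k for all t ∈ I. Then x₀'(t) = a(t)f(x₀(t)) for all t ∈ I; that is, x = φ⁻¹(k + φ(x₁)) is a superposition rule involving a single solution for the separable equation ẋ = a(t)f(x). -/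
/-!
Separation of variables: a differentiable `x` solves `ẋ = a(t) f(x)` exactly when
`(φ ∘ x)' = a`, because `φ' = 1/f` does not vanish. Since `φ ∘ x₀` and `φ ∘ x₁` differ by
the constant `k`, they have the same derivative `a`, so `x₀` is a solution as well.
-/

open Filter

theorem hasDerivAt_iff_hasDerivAt_comp_of_hasDerivAt_inv {f φ x : ℝ → ℝ} {a t : ℝ}
    (hφ : ∀ y, HasDerivAt φ (f y)⁻¹ y) (hf : ∀ y, f y ≠ 0) (hx : DifferentiableAt ℝ x t) :
    HasDerivAt x (a * f (x t)) t ↔ HasDerivAt (φ ∘ x) a t := by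
  have hcancel : (f (x t))⁻¹ * (a * f (x t)) = a := by field_simp [hf (x t)]
  constructor
  · intro h
    simpa only [hcancel] using (hφ (x t)).comp t h
  · intro h
    simpa only [div_inv_eq_mul] using
      (hφ (x t)).of_comp_left hx.continuousAt h (inv_ne_zero (hf _)) EventuallyEq.rfl

theorem stmt_10_general (f : ℝ → ℝ) (hf : Continuous f) (hfpos : ∀ x : ℝ, 0 < f x)
    (φ : ℝ → ℝ) (hφ : φ = fun y : ℝ => ∫ ζ in (0 : ℝ)..y, 1 / f ζ)
    (I : Set ℝ) (hIopen : IsOpen I)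
    (a : ℝ → ℝ) (x₁ : ℝ → ℝ)
    (hx₁ : ∀ t ∈ I, HasDerivAt x₁ (a t * f (x₁ t)) t)
    (k : ℝ) (x₀ : ℝ → ℝ)
    (hx₀diff : ∀ t ∈ I, DifferentiableAt ℝ x₀ t)
    (hx₀ : ∀ t ∈ I, φ (x₀ t) - φ (x₁ t) = k) :
    ∀ t ∈ I, HasDerivAt x₀ (a t * f (x₀ t)) t := by
  have hf₀ : ∀ y, f y ≠ 0 := fun y => (hfpos y).ne'
  have hφ' : ∀ y, HasDerivAt φ (f y)⁻¹ y := fun y => by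
    have hinv : Continuous fun ζ => 1 / f ζ := continuous_const.div hf hf₀
    subst hφ
    simpa only [one_div] using (hinv.integral_hasStrictDerivAt 0 y).hasDerivAt
  intro t ht
  have hφx₁ : HasDerivAt (φ ∘ x₁) (a t) t :=
    (hasDerivAt_iff_hasDerivAt_comp_of_hasDerivAt_inv hφ' hf₀ (hx₁ t ht).differentiableAt).1
      (hx₁ t ht)
  rw [hasDerivAt_iff_hasDerivAt_comp_of_hasDerivAt_inv hφ' hf₀ (hx₀diff t ht)]
  refine (hφx₁.add_const k).congr_of_eventuallyEq ?_
  filter_upwards [hIopen.mem_nhds ht] with s hs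
  simp only [Function.comp_apply]
  linarith [hx₀ s hs]

/-- Superposition rule with one particular solution for the separable equation
`ẋ = a(t)f(x)` with `f` continuous and positive: with `φ(y) = ∫₀^y dζ/f(ζ)`,
if `x₁` is a solution on an (open) interval `I` and `x₀` is differentiable with
`φ(x₀(t)) − φ(x₁(t)) = k` on `I`, then `x₀` is also a solution on `I`. -/
theorem stmt_10 (f : ℝ → ℝ) (hf : Continuous f) (hfpos : ∀ x : ℝ, 0 < f x)
    (φ : ℝ → ℝ) (hφ : φ = fun y : ℝ => ∫ ζ in (0 : ℝ)..y, 1 / f ζ)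
    (I : Set ℝ) (hIopen : IsOpen I) (hIconn : I.OrdConnected)
    (a : ℝ → ℝ) (x₁ : ℝ → ℝ)
    (hx₁ : ∀ t ∈ I, HasDerivAt x₁ (a t * f (x₁ t)) t)
    (k : ℝ) (x₀ : ℝ → ℝ)
    (hx₀diff : ∀ t ∈ I, DifferentiableAt ℝ x₀ t)
    (hx₀ : ∀ t ∈ I, φ (x₀ t) - φ (x₁ t) = k) :
    ∀ t ∈ I, HasDerivAt x₀ (a t * f (x₀ t)) t :=
  stmt_10_general f hf hfpos φ hφ I hIopen a x₁ hx₁ k x₀ hx₀diff hx₀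
end

section
/- Let a₁₂, b₁, b₂ : I → ℝ on an interval I and suppose (x₀, y₀) and (x₁, y₁) are two differentiable solutions on I of the planar system dx/dt = a₁₂(t) y + b₁(t), dy/dt = −a₁₂(t) x + b₂(t). Then the squared Euclidean distance t ↦ (x₀(t) − x₁(t))² + (y₀(t) − y₁(t))² is constant on I. (Together with a second solution this yields a superposition rule for this system involving only m = 2 particular solutions, reflecting that the relevant group is the Euclidean group rather than the affine group.) -/
/-!
The difference `(u, v)` of two solutions satisfies the homogeneous system `u' = a₁₂ v`,
`v' = -a₁₂ u`, whose flow is a time-dependent rotation; hence `(u² + v²)' = 2a₁₂(uv - vu) = 0`,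
and a function with vanishing derivative on an interval is constant there.
-/

theorem Convex.eq_of_hasDerivWithinAt_eq_zero {E : Type*} [NormedAddCommGroup E]
    [NormedSpace ℝ E] {s : Set ℝ} {f : ℝ → E} (hs : Convex ℝ s)
    (hf : ∀ t ∈ s, HasDerivWithinAt f 0 s t) {x y : ℝ} (hx : x ∈ s) (hy : y ∈ s) :
    f x = f y := by
  have h := hs.norm_image_sub_le_of_norm_hasDerivWithin_le hf (fun _ _ => norm_zero.le) hy hx
  rw [zero_mul, norm_le_zero_iff, sub_eq_zero] at h
  exact h

theorem HasDerivAt.sq_add_sq_of_rotation {u v : ℝ → ℝ} {a t : ℝ}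
    (hu : HasDerivAt u (a * v t) t) (hv : HasDerivAt v (-a * u t) t) :
    HasDerivAt (fun s => u s ^ 2 + v s ^ 2) 0 t :=
  ((hu.pow 2).add (hv.pow 2)).congr_deriv (by ring)

/-- For the planar system `dx/dt = a₁₂(t)y + b₁(t)`, `dy/dt = −a₁₂(t)x + b₂(t)`
(a Lie system of the Euclidean group), the squared Euclidean distance between
any two solutions `(x₀,y₀)` and `(x₁,y₁)` is constant on the interval `I`. -/
theorem stmt_12 (I : Set ℝ) (hI : I.OrdConnected)
    (a₁₂ b₁ b₂ : ℝ → ℝ)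
    (x₀ y₀ x₁ y₁ : ℝ → ℝ)
    (h₀x : ∀ t ∈ I, HasDerivAt x₀ (a₁₂ t * y₀ t + b₁ t) t)
    (h₀y : ∀ t ∈ I, HasDerivAt y₀ (-(a₁₂ t) * x₀ t + b₂ t) t)
    (h₁x : ∀ t ∈ I, HasDerivAt x₁ (a₁₂ t * y₁ t + b₁ t) t)
    (h₁y : ∀ t ∈ I, HasDerivAt y₁ (-(a₁₂ t) * x₁ t + b₂ t) t) :
    ∀ s ∈ I, ∀ t ∈ I,
      (x₀ s - x₁ s) ^ 2 + (y₀ s - y₁ s) ^ 2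
        = (x₀ t - x₁ t) ^ 2 + (y₀ t - y₁ t) ^ 2 := by
  have hderiv : ∀ t ∈ I,
      HasDerivAt (fun s => (x₀ s - x₁ s) ^ 2 + (y₀ s - y₁ s) ^ 2) 0 t := by
    intro t ht
    have hx : HasDerivAt (fun s => x₀ s - x₁ s) (a₁₂ t * (y₀ t - y₁ t)) t :=
      ((h₀x t ht).sub (h₁x t ht)).congr_deriv (by ring)
    have hy : HasDerivAt (fun s => y₀ s - y₁ s) (-a₁₂ t * (x₀ t - x₁ t)) t :=
      ((h₀y t ht).sub (h₁y t ht)).congr_deriv (by ring)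
    exact hx.sq_add_sq_of_rotation hy
  intro s hs t ht
  exact hI.convex.eq_of_hasDerivWithinAt_eq_zero
    (fun r hr => (hderiv r hr).hasDerivWithinAt) hs ht
end

section
/- Let b₁, b₂, b₃ : I → ℝ on an interval I and let u, u₁, u₂, u₃ : I → ℝ be four differentiable solutions of the Riccati equation u'(t) = b₁(t) + b₂(t)u(t) + b₃(t)u(t)², such that (u(t) − u₂(t))·(u₁(t) − u₃(t)) ≠ 0 for all t ∈ I. Then the cross-ratio t ↦ (u(t) − u₁(t))(u₂(t) − u₃(t)) / ((u(t) − u₂(t))(u₁(t) − u₃(t))) is constant on I. (The level sets of this cross-ratio define the superposition foliation for the Riccati equation.) -/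
/-!
Each difference `uᵢ - uⱼ` of two Riccati solutions satisfies the linear equation
`(uᵢ - uⱼ)' = (uᵢ - uⱼ) (b₂ + b₃ (uᵢ + uⱼ))`. Numerator and denominator of the cross-ratio
are products of two such differences using all four solutions, so both have the same
logarithmic derivative `2 b₂ + b₃ (u + u₁ + u₂ + u₃)`, and their quotient has derivative zero.
-/

theorem Convex.is_const_of_hasDerivWithinAt_zero {E : Type*} [NormedAddCommGroup E]
    [NormedSpace ℝ E] {f : ℝ → E} {s : Set ℝ} (hs : Convex ℝ s)
    (hf : ∀ x ∈ s, HasDerivWithinAt f 0 s x) {x y : ℝ} (hx : x ∈ s) (hy : y ∈ s) :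
    f x = f y := by
  have h := hs.norm_image_sub_le_of_norm_hasDerivWithin_le hf
    (fun _ _ => (norm_zero (E := E)).le) hx hy
  rw [zero_mul, norm_le_zero_iff, sub_eq_zero] at h
  exact h.symm

section

variable {𝕜 : Type*} [NontriviallyNormedField 𝕜]

theorem HasDerivAt.sub_of_riccati {u v : 𝕜 → 𝕜} {a b c t : 𝕜}
    (hu : HasDerivAt u (a + b * u t + c * u t ^ 2) t)
    (hv : HasDerivAt v (a + b * v t + c * v t ^ 2) t) :
    HasDerivAt (fun s => u s - v s) ((u t - v t) * (b + c * (u t + v t))) t :=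
  (hu.sub hv).congr_deriv (by ring)

theorem HasDerivAt.mul_of_logDeriv {f g : 𝕜 → 𝕜} {p q t : 𝕜}
    (hf : HasDerivAt f (f t * p) t) (hg : HasDerivAt g (g t * q) t) :
    HasDerivAt (fun s => f s * g s) (f t * g t * (p + q)) t :=
  (hf.mul hg).congr_deriv (by ring)

theorem HasDerivAt.div_of_logDeriv_eq {f g : 𝕜 → 𝕜} {p t : 𝕜}
    (hf : HasDerivAt f (f t * p) t) (hg : HasDerivAt g (g t * p) t) (hg₀ : g t ≠ 0) :
    HasDerivAt (fun s => f s / g s) 0 t :=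
  (hf.div hg hg₀).congr_deriv (by rw [div_eq_zero_iff]; left; ring)

theorem hasDerivAt_crossRatio_of_riccati {u u₁ u₂ u₃ : 𝕜 → 𝕜} {a b c t : 𝕜}
    (hu : HasDerivAt u (a + b * u t + c * u t ^ 2) t)
    (hu₁ : HasDerivAt u₁ (a + b * u₁ t + c * u₁ t ^ 2) t)
    (hu₂ : HasDerivAt u₂ (a + b * u₂ t + c * u₂ t ^ 2) t)
    (hu₃ : HasDerivAt u₃ (a + b * u₃ t + c * u₃ t ^ 2) t)
    (hne : (u t - u₂ t) * (u₁ t - u₃ t) ≠ 0) :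
    HasDerivAt (fun s => (u s - u₁ s) * (u₂ s - u₃ s) / ((u s - u₂ s) * (u₁ s - u₃ s))) 0 t := by
  have hnum := (hu.sub_of_riccati hu₁).mul_of_logDeriv (hu₂.sub_of_riccati hu₃)
  have hden := (hu.sub_of_riccati hu₂).mul_of_logDeriv (hu₁.sub_of_riccati hu₃)
  have hsame : b + c * (u t + u₂ t) + (b + c * (u₁ t + u₃ t))
      = b + c * (u t + u₁ t) + (b + c * (u₂ t + u₃ t)) := by ring
  rw [hsame] at hden
  exact hnum.div_of_logDeriv_eq hden hne

end

/-- The cross-ratio of four solutions of the Riccati equation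
`u' = b₁ + b₂u + b₃u²` is constant on the interval `I`, provided the
denominator `(u − u₂)(u₁ − u₃)` never vanishes on `I`. -/
theorem stmt_15 (I : Set ℝ) (hI : I.OrdConnected) (b₁ b₂ b₃ : ℝ → ℝ)
    (u u₁ u₂ u₃ : ℝ → ℝ)
    (hu : ∀ t ∈ I, HasDerivAt u (b₁ t + b₂ t * u t + b₃ t * u t ^ 2) t)
    (hu₁ : ∀ t ∈ I, HasDerivAt u₁ (b₁ t + b₂ t * u₁ t + b₃ t * u₁ t ^ 2) t)
    (hu₂ : ∀ t ∈ I, HasDerivAt u₂ (b₁ t + b₂ t * u₂ t + b₃ t * u₂ t ^ 2) t)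
    (hu₃ : ∀ t ∈ I, HasDerivAt u₃ (b₁ t + b₂ t * u₃ t + b₃ t * u₃ t ^ 2) t)
    (hne : ∀ t ∈ I, (u t - u₂ t) * (u₁ t - u₃ t) ≠ 0) :
    ∀ s ∈ I, ∀ t ∈ I,
      (u s - u₁ s) * (u₂ s - u₃ s) / ((u s - u₂ s) * (u₁ s - u₃ s))
        = (u t - u₁ t) * (u₂ t - u₃ t) / ((u t - u₂ t) * (u₁ t - u₃ t)) := by
  intro s hs t ht
  exact hI.convex.is_const_of_hasDerivWithinAt_zero (fun x hx =>
    (hasDerivAt_crossRatio_of_riccati (hu x hx) (hu₁ x hx) (hu₂ x hx) (hu₃ x hx)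
      (hne x hx)).hasDerivWithinAt) hs ht
end

section
/- Let b₁, b₂, b₃ : I → ℝ on an interval I, let u₁, u₂, u₃ : I → ℝ be differentiable solutions of the Riccati equation u'(t) = b₁(t) + b₂(t)u(t) + b₃(t)u(t)² whose pairwise differences never vanish on I, and let k ∈ ℝ be such that D(t) := (u₁(t) − u₃(t))·k + (u₃(t) − u₂(t)) ≠ 0 for all t ∈ I. Then u(t) := ((u₁(t) − u₃(t))·u₂(t)·k + u₁(t)·(u₃(t) − u₂(t))) / D(t) is also a solution of the Riccati equation on I. Thus the Riccati equation admits the superposition rule u = Φ(u₁, u₂, u₃; k) of m = 3 particular solutions given by this formula. -/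
/-! The formula says that `u` is the point whose cross-ratio with `(u₁, u₂, u₃)` equals `k`.
Riccati flows act by Möbius transformations, which preserve cross-ratios, so `u` is again a
solution; concretely, the quotient rule turns this into a polynomial identity. -/

noncomputable def riccatiSuperposition (x₁ x₂ x₃ k : ℝ) : ℝ :=
  ((x₁ - x₃) * x₂ * k + x₁ * (x₃ - x₂)) / ((x₁ - x₃) * k + (x₃ - x₂))

theorem HasDerivAt.riccatiSuperposition {u₁ u₂ u₃ : ℝ → ℝ} {a b c k t : ℝ}
    (h₁ : HasDerivAt u₁ (a + b * u₁ t + c * u₁ t ^ 2) t)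
    (h₂ : HasDerivAt u₂ (a + b * u₂ t + c * u₂ t ^ 2) t)
    (h₃ : HasDerivAt u₃ (a + b * u₃ t + c * u₃ t ^ 2) t)
    (hD : (u₁ t - u₃ t) * k + (u₃ t - u₂ t) ≠ 0) :
    HasDerivAt (fun s => riccatiSuperposition (u₁ s) (u₂ s) (u₃ s) k)
      (a + b * riccatiSuperposition (u₁ t) (u₂ t) (u₃ t) k
        + c * riccatiSuperposition (u₁ t) (u₂ t) (u₃ t) k ^ 2) t := by
  have hN := (((h₁.sub h₃).mul h₂).mul_const k).add (h₁.mul (h₃.sub h₂))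
  have hD' := ((h₁.sub h₃).mul_const k).add (h₃.sub h₂)
  refine (hN.div hD' hD).congr_deriv ?_
  simp only [_root_.riccatiSuperposition, Pi.add_apply, Pi.sub_apply, Pi.mul_apply]
  field_simp
  ring

theorem stmt_16_general (I : Set ℝ) (b₁ b₂ b₃ : ℝ → ℝ) (u₁ u₂ u₃ : ℝ → ℝ)
    (hu₁ : ∀ t ∈ I, HasDerivAt u₁ (b₁ t + b₂ t * u₁ t + b₃ t * u₁ t ^ 2) t)
    (hu₂ : ∀ t ∈ I, HasDerivAt u₂ (b₁ t + b₂ t * u₂ t + b₃ t * u₂ t ^ 2) t)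
    (hu₃ : ∀ t ∈ I, HasDerivAt u₃ (b₁ t + b₂ t * u₃ t + b₃ t * u₃ t ^ 2) t)
    (k : ℝ)
    (hD : ∀ t ∈ I, (u₁ t - u₃ t) * k + (u₃ t - u₂ t) ≠ 0)
    (u : ℝ → ℝ)
    (hu : u = fun s =>
      ((u₁ s - u₃ s) * u₂ s * k + u₁ s * (u₃ s - u₂ s))
        / ((u₁ s - u₃ s) * k + (u₃ s - u₂ s))) :
    ∀ t ∈ I, HasDerivAt u (b₁ t + b₂ t * u t + b₃ t * u t ^ 2) t := by
  subst hu
  intro t ht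
  exact (hu₁ t ht).riccatiSuperposition (hu₂ t ht) (hu₃ t ht) (hD t ht)

/-- Superposition rule for the Riccati equation with `m = 3` particular
solutions: if `u₁, u₂, u₃` are solutions of `u' = b₁ + b₂u + b₃u²` on `I`
whose pairwise differences never vanish, `k ∈ ℝ`, and the denominator
`D = (u₁ − u₃)k + (u₃ − u₂)` never vanishes on `I`, then
`u = ((u₁ − u₃)u₂k + u₁(u₃ − u₂)) / D` is also a solution on `I`. -/
theorem stmt_16 (I : Set ℝ) (b₁ b₂ b₃ : ℝ → ℝ) (u₁ u₂ u₃ : ℝ → ℝ)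
    (hu₁ : ∀ t ∈ I, HasDerivAt u₁ (b₁ t + b₂ t * u₁ t + b₃ t * u₁ t ^ 2) t)
    (hu₂ : ∀ t ∈ I, HasDerivAt u₂ (b₁ t + b₂ t * u₂ t + b₃ t * u₂ t ^ 2) t)
    (hu₃ : ∀ t ∈ I, HasDerivAt u₃ (b₁ t + b₂ t * u₃ t + b₃ t * u₃ t ^ 2) t)
    (hpair : ∀ t ∈ I, u₁ t ≠ u₂ t ∧ u₁ t ≠ u₃ t ∧ u₂ t ≠ u₃ t)
    (k : ℝ)
    (hD : ∀ t ∈ I, (u₁ t - u₃ t) * k + (u₃ t - u₂ t) ≠ 0)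
    (u : ℝ → ℝ)
    (hu : u = fun s =>
      ((u₁ s - u₃ s) * u₂ s * k + u₁ s * (u₃ s - u₂ s))
        / ((u₁ s - u₃ s) * k + (u₃ s - u₂ s))) :
    ∀ t ∈ I, HasDerivAt u (b₁ t + b₂ t * u t + b₃ t * u t ^ 2) t :=
  stmt_16_general I b₁ b₂ b₃ u₁ u₂ u₃ hu₁ hu₂ hu₃ k hD u hu
end

section
/- Let a, b, c, d, e, f : ℝ² → ℝ and let u, u₁, u₂, u₃ : ℝ² → ℝ be differentiable functions each satisfying the system of partial differential equations ∂v/∂x = a(x,y)v² + b(x,y)v + c(x,y) and ∂v/∂y = d(x,y)v² + e(x,y)v + f(x,y) at every point of ℝ². Assume (u − u₂)(u₁ − u₃) vanishes nowhere on ℝ². Then the cross-ratio (x,y) ↦ (u(x,y) − u₁(x,y))(u₂(x,y) − u₃(x,y)) / ((u(x,y) − u₂(x,y))(u₁(x,y) − u₃(x,y))) is constant on ℝ². (This is the superposition rule, in terms of three independent solutions, for the Riccati-type system of PDEs, exactly as for the Riccati ODE.) -/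
/-!
If `v₁, v₂` solve `∂_w v = α v² + β v + γ`, the difference satisfies the linear equation
`∂_w (v₁ - v₂) = (v₁ - v₂) (α (v₁ + v₂) + β)`. Hence numerator and denominator of the cross-ratio
both have logarithmic derivative `α (u + u₁ + u₂ + u₃) + 2β` in every coordinate direction, so the
cross-ratio has vanishing derivative on the connected space `ℝ²` and is constant.
-/

section
variable {E : Type*} [NormedAddCommGroup E] [NormedSpace ℝ E] {p w : E}

theorem fderiv_fun_sub_apply_of_riccati {v₁ v₂ : E → ℝ} {α β γ : ℝ}
    (hv₁ : DifferentiableAt ℝ v₁ p) (hv₂ : DifferentiableAt ℝ v₂ p)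
    (h₁ : fderiv ℝ v₁ p w = α * v₁ p ^ 2 + β * v₁ p + γ)
    (h₂ : fderiv ℝ v₂ p w = α * v₂ p ^ 2 + β * v₂ p + γ) :
    fderiv ℝ (fun q => v₁ q - v₂ q) p w = (v₁ p - v₂ p) * (α * (v₁ p + v₂ p) + β) := by
  rw [fderiv_fun_sub hv₁ hv₂, sub_apply, h₁, h₂]
  ring

theorem fderiv_fun_mul_apply_of_eq_mul {g h : E → ℝ} {μ ν : ℝ}
    (hg : DifferentiableAt ℝ g p) (hh : DifferentiableAt ℝ h p)
    (hg' : fderiv ℝ g p w = g p * μ) (hh' : fderiv ℝ h p w = h p * ν) :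
    fderiv ℝ (fun q => g q * h q) p w = g p * h p * (μ + ν) := by
  rw [fderiv_fun_mul hg hh, add_apply, smul_apply, smul_apply, hg', hh', smul_eq_mul,
    smul_eq_mul]
  ring

theorem fderiv_fun_inv_apply {h : E → ℝ} (hh : DifferentiableAt ℝ h p) (hp : h p ≠ 0) :
    fderiv ℝ (fun q => (h q)⁻¹) p w = -fderiv ℝ h p w / h p ^ 2 := by
  rw [show (fun q => (h q)⁻¹) = (fun x : ℝ => x⁻¹) ∘ h from rfl,
    fderiv_comp p (differentiableAt_inv hp) hh, ContinuousLinearMap.comp_apply, fderiv_inv]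
  simp only [ContinuousLinearMap.toSpanSingleton_apply, smul_eq_mul, mul_neg]
  ring

theorem fderiv_fun_div_apply_eq_zero {g h : E → ℝ} {μ : ℝ}
    (hg : DifferentiableAt ℝ g p) (hh : DifferentiableAt ℝ h p) (hp : h p ≠ 0)
    (hg' : fderiv ℝ g p w = g p * μ) (hh' : fderiv ℝ h p w = h p * μ) :
    fderiv ℝ (fun q => g q / h q) p w = 0 := by
  simp only [div_eq_mul_inv]
  rw [fderiv_fun_mul hg (hh.fun_inv hp), add_apply, smul_apply, smul_apply,
    fderiv_fun_inv_apply hh hp, hg', hh', smul_eq_mul, smul_eq_mul]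
  field_simp
  ring

noncomputable def crossRatio (u u₁ u₂ u₃ : E → ℝ) (q : E) : ℝ :=
  (u q - u₁ q) * (u₂ q - u₃ q) / ((u q - u₂ q) * (u₁ q - u₃ q))

theorem fderiv_crossRatio_apply_eq_zero {u u₁ u₂ u₃ : E → ℝ} {α β γ : ℝ}
    (hu : DifferentiableAt ℝ u p) (hu₁ : DifferentiableAt ℝ u₁ p)
    (hu₂ : DifferentiableAt ℝ u₂ p) (hu₃ : DifferentiableAt ℝ u₃ p)
    (hu' : fderiv ℝ u p w = α * u p ^ 2 + β * u p + γ)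
    (hu₁' : fderiv ℝ u₁ p w = α * u₁ p ^ 2 + β * u₁ p + γ)
    (hu₂' : fderiv ℝ u₂ p w = α * u₂ p ^ 2 + β * u₂ p + γ)
    (hu₃' : fderiv ℝ u₃ p w = α * u₃ p ^ 2 + β * u₃ p + γ)
    (hne : (u p - u₂ p) * (u₁ p - u₃ p) ≠ 0) :
    fderiv ℝ (crossRatio u u₁ u₂ u₃) p w = 0 := by
  set μ := α * (u p + u₁ p + u₂ p + u₃ p) + 2 * β
  refine fderiv_fun_div_apply_eq_zero (μ := μ) ((hu.fun_sub hu₁).fun_mul (hu₂.fun_sub hu₃))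
    ((hu.fun_sub hu₂).fun_mul (hu₁.fun_sub hu₃)) hne ?_ ?_
  · rw [fderiv_fun_mul_apply_of_eq_mul (hu.fun_sub hu₁) (hu₂.fun_sub hu₃)
      (fderiv_fun_sub_apply_of_riccati hu hu₁ hu' hu₁')
      (fderiv_fun_sub_apply_of_riccati hu₂ hu₃ hu₂' hu₃')]
    ring
  · rw [fderiv_fun_mul_apply_of_eq_mul (hu.fun_sub hu₂) (hu₁.fun_sub hu₃)
      (fderiv_fun_sub_apply_of_riccati hu hu₂ hu' hu₂')
      (fderiv_fun_sub_apply_of_riccati hu₁ hu₃ hu₁' hu₃')]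
    ring

end

theorem ContinuousLinearMap.eq_zero_of_apply_one_zero_of_apply_zero_one {R M : Type*}
    [Semiring R] [TopologicalSpace R] [AddCommMonoid M] [Module R M] [TopologicalSpace M]
    {L : R × R →L[R] M} (h₁ : L (1, 0) = 0) (h₂ : L (0, 1) = 0) : L = 0 := by
  ext <;> simpa

/-- Superposition rule for the Riccati-type system of PDEs
`∂v/∂x = a v² + b v + c`, `∂v/∂y = d v² + e v + f` on `ℝ²`: if `u, u₁, u₂, u₃`
are four differentiable solutions and `(u − u₂)(u₁ − u₃)` vanishes nowhere,
then the cross-ratio `(u − u₁)(u₂ − u₃) / ((u − u₂)(u₁ − u₃))` is constant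
on `ℝ²`. -/
theorem stmt_18 (a b c d e f : ℝ × ℝ → ℝ)
    (u u₁ u₂ u₃ : ℝ × ℝ → ℝ)
    (hu : Differentiable ℝ u) (hu₁ : Differentiable ℝ u₁)
    (hu₂ : Differentiable ℝ u₂) (hu₃ : Differentiable ℝ u₃)
    (hux : ∀ p : ℝ × ℝ,
      fderiv ℝ u p ((1 : ℝ), (0 : ℝ)) = a p * u p ^ 2 + b p * u p + c p)
    (huy : ∀ p : ℝ × ℝ,
      fderiv ℝ u p ((0 : ℝ), (1 : ℝ)) = d p * u p ^ 2 + e p * u p + f p)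
    (hu₁x : ∀ p : ℝ × ℝ,
      fderiv ℝ u₁ p ((1 : ℝ), (0 : ℝ)) = a p * u₁ p ^ 2 + b p * u₁ p + c p)
    (hu₁y : ∀ p : ℝ × ℝ,
      fderiv ℝ u₁ p ((0 : ℝ), (1 : ℝ)) = d p * u₁ p ^ 2 + e p * u₁ p + f p)
    (hu₂x : ∀ p : ℝ × ℝ,
      fderiv ℝ u₂ p ((1 : ℝ), (0 : ℝ)) = a p * u₂ p ^ 2 + b p * u₂ p + c p)
    (hu₂y : ∀ p : ℝ × ℝ,
      fderiv ℝ u₂ p ((0 : ℝ), (1 : ℝ)) = d p * u₂ p ^ 2 + e p * u₂ p + f p)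
    (hu₃x : ∀ p : ℝ × ℝ,
      fderiv ℝ u₃ p ((1 : ℝ), (0 : ℝ)) = a p * u₃ p ^ 2 + b p * u₃ p + c p)
    (hu₃y : ∀ p : ℝ × ℝ,
      fderiv ℝ u₃ p ((0 : ℝ), (1 : ℝ)) = d p * u₃ p ^ 2 + e p * u₃ p + f p)
    (hne : ∀ p : ℝ × ℝ, (u p - u₂ p) * (u₁ p - u₃ p) ≠ 0) :
    ∀ p q : ℝ × ℝ,
      (u p - u₁ p) * (u₂ p - u₃ p) / ((u p - u₂ p) * (u₁ p - u₃ p))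
        = (u q - u₁ q) * (u₂ q - u₃ q) / ((u q - u₂ q) * (u₁ q - u₃ q)) := by
  have hdiff : Differentiable ℝ (crossRatio u u₁ u₂ u₃) := by
    unfold crossRatio
    simp only [div_eq_mul_inv]
    exact ((hu.fun_sub hu₁).fun_mul (hu₂.fun_sub hu₃)).fun_mul
      (((hu.fun_sub hu₂).fun_mul (hu₁.fun_sub hu₃)).fun_inv hne)
  refine is_const_of_fderiv_eq_zero hdiff fun p => ?_
  exact ContinuousLinearMap.eq_zero_of_apply_one_zero_of_apply_zero_one
    (fderiv_crossRatio_apply_eq_zero (hu p) (hu₁ p) (hu₂ p) (hu₃ p)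
      (hux p) (hu₁x p) (hu₂x p) (hu₃x p) (hne p))
    (fderiv_crossRatio_apply_eq_zero (hu p) (hu₁ p) (hu₂ p) (hu₃ p)
      (huy p) (hu₁y p) (hu₂y p) (hu₃y p) (hne p))
end
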